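/- Dynamic regret of β-FTRL on unbounded domains (simplified): for β ∈ (0,1), α > 0, losses v_1,...,T with |v_t| ≤ G, define M = max_{t∈[1,T]} |∑_{s=1}^t β^{t-s} v_s| / √(∑_{s=1}^t (β^{t-s} v_s)^2) (taken as 0 when the denominator vanishes). Then for any comparator sequence u_0,...,u_{T-1} with |u_t| ≤ αM for all t, the β-FTRL iterates satisfy ∑_{t=1}^T v_t(Δ_{t-1} - u_{t-1}) ≤ C[(α + αM^2 + MP) G/√(1-β) + (α + αM^2)√(1-β) G T] for an absolute constant C, where P = ∑_{t=1}^{T-1} |u_t - u_{t-1}|. -/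

import Mathlib

/-!
Write `S_t` for the discounted sum of the losses and `R_t` for its discounted norm, so that
`Δ_t = -α S_t / R_t`, and let `M` bound `|S_t| / R_t`. One step of β-FTRL costs at most
`α/2 (β S_{t-1}²/R_{t-1} - S_t²/R_t) + 2α(1 + M + M²)(R_t - β R_{t-1})`: when `R_t` is small
compared with `β R_{t-1}` this is the usual FTRL potential computation, and otherwise
`R_t ≤ 2 (R_t - β R_{t-1})`, so the step is paid for by the growth of the norm. Summing, the
potential telescopes and `∑ (R_t - β R_{t-1}) ≤ R_T + (1 - β) T max R_t`, while the geometric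
series gives `R_t ≤ G / √(1 - β)`. The comparator is handled by summation by parts against the
discounted sums, using `S_t - β S_{t-1} = v_t` and `|S_t| ≤ M R_t`.
-/

-- `√0 = 0` and `x / 0 = 0`, so the case split in the definition of β-FTRL is redundant.
theorem ite_eq_zero_div_sqrt (q x : ℝ) : (if q = 0 then 0 else x / √q) = x / √q := by
  split_ifs with h <;> simp [h]

namespace BetaFTRL

open Finset

noncomputable section

def discountedSum (β : ℝ) (v : ℕ → ℝ) (t : ℕ) : ℝ := ∑ s ∈ Icc 1 t, β ^ (t - s) * v s

def discountedSqSum (β : ℝ) (v : ℕ → ℝ) (t : ℕ) : ℝ := ∑ s ∈ Icc 1 t, (β ^ (t - s) * v s) ^ 2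

def discountedNorm (β : ℝ) (v : ℕ → ℝ) (t : ℕ) : ℝ := √(discountedSqSum β v t)

end

variable {β : ℝ} {v : ℕ → ℝ} {t : ℕ}

@[simp] theorem discountedSum_zero : discountedSum β v 0 = 0 := by simp [discountedSum]

theorem discountedSum_succ (β : ℝ) (v : ℕ → ℝ) (t : ℕ) :
    discountedSum β v (t + 1) = β * discountedSum β v t + v (t + 1) := by
  rw [discountedSum, discountedSum, sum_Icc_succ_top (by omega), Nat.sub_self, pow_zero, one_mul,
    mul_sum]
  congr 1
  refine sum_congr rfl fun s hs => ?_
  rw [Nat.sub_add_comm (mem_Icc.1 hs).2, pow_succ]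
  ring

theorem discountedSqSum_eq_discountedSum :
    discountedSqSum β v t = discountedSum (β ^ 2) (fun s => v s ^ 2) t :=
  sum_congr rfl fun s _ => by rw [mul_pow, pow_right_comm]

theorem discountedSqSum_succ (β : ℝ) (v : ℕ → ℝ) (t : ℕ) :
    discountedSqSum β v (t + 1) = β ^ 2 * discountedSqSum β v t + v (t + 1) ^ 2 := by
  simp only [discountedSqSum_eq_discountedSum, discountedSum_succ]

theorem discountedSqSum_nonneg : 0 ≤ discountedSqSum β v t :=
  sum_nonneg fun _ _ => sq_nonneg _

theorem discountedNorm_nonneg : 0 ≤ discountedNorm β v t := Real.sqrt_nonneg _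

@[simp] theorem discountedNorm_zero : discountedNorm β v 0 = 0 := by
  simp [discountedNorm, discountedSqSum]

theorem discountedNorm_sq : discountedNorm β v t ^ 2 = discountedSqSum β v t :=
  Real.sq_sqrt discountedSqSum_nonneg

theorem discountedNorm_succ_sq (β : ℝ) (v : ℕ → ℝ) (t : ℕ) :
    discountedNorm β v (t + 1) ^ 2 = β ^ 2 * discountedNorm β v t ^ 2 + v (t + 1) ^ 2 := by
  rw [discountedNorm_sq, discountedNorm_sq, discountedSqSum_succ]

theorem discountedSum_eq_zero_of_discountedNorm_eq_zero (h : discountedNorm β v t = 0) :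
    discountedSum β v t = 0 := by
  have hQ : discountedSqSum β v t = 0 := by rw [← discountedNorm_sq, h, sq, mul_zero]
  refine sum_eq_zero fun s hs => pow_eq_zero_iff two_ne_zero |>.1 ?_
  exact (sum_eq_zero_iff_of_nonneg fun _ _ => sq_nonneg _).1 hQ s hs

theorem abs_discountedSum_le_of_div_le {M : ℝ}
    (h : |discountedSum β v t| / discountedNorm β v t ≤ M) :
    |discountedSum β v t| ≤ M * discountedNorm β v t := by
  rcases discountedNorm_nonneg.eq_or_lt with hR | hR
  · rw [← hR, discountedSum_eq_zero_of_discountedNorm_eq_zero hR.symm]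
    simp
  · exact (div_le_iff₀ hR).1 h

theorem abs_discountedSum_le_sup'_mul {T : ℕ} (hT : (Icc 1 T).Nonempty) (ht : t ≤ T) :
    |discountedSum β v t| ≤
      (Icc 1 T).sup' hT (fun t => |discountedSum β v t| / discountedNorm β v t) *
        discountedNorm β v t := by
  refine abs_discountedSum_le_of_div_le ?_
  rcases t with _ | t
  · obtain ⟨k, hk⟩ := hT
    simpa using le_sup'_of_le (fun t => |discountedSum β v t| / discountedNorm β v t) hk
      (div_nonneg (abs_nonneg _) discountedNorm_nonneg)
  · exact le_sup' (fun t => |discountedSum β v t| / discountedNorm β v t) (mem_Icc.2 ⟨by omega, ht⟩)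

theorem discountedSum_le_of_le {c : ℝ} (hβ0 : 0 ≤ β) (hβ1 : β < 1) (hc : 0 ≤ c)
    (hv : ∀ s ∈ Icc 1 t, v s ≤ c) : discountedSum β v t ≤ c / (1 - β) := by
  induction t with
  | zero => simp only [discountedSum_zero]; exact div_nonneg hc (by linarith)
  | succ t ih =>
    have ih := ih fun s hs => hv s (Icc_subset_Icc_right t.le_succ hs)
    have hvt := hv (t + 1) (by simp)
    calc discountedSum β v (t + 1) = β * discountedSum β v t + v (t + 1) := discountedSum_succ ..
      _ ≤ β * (c / (1 - β)) + c := by gcongr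
      _ = c / (1 - β) := by field_simp [(by linarith : (1 - β) ≠ 0)]; ring

theorem discountedNorm_le {G : ℝ} (hβ0 : 0 ≤ β) (hβ1 : β < 1) (hG : 0 ≤ G)
    (hv : ∀ s ∈ Icc 1 t, |v s| ≤ G) : discountedNorm β v t ≤ G / √(1 - β) := by
  have hQ : discountedSqSum β v t ≤ G ^ 2 / (1 - β ^ 2) := by
    rw [discountedSqSum_eq_discountedSum]
    refine discountedSum_le_of_le (sq_nonneg β) (by nlinarith) (sq_nonneg G) fun s hs => ?_
    exact sq_le_sq' (abs_le.1 (hv s hs)).1 (abs_le.1 (hv s hs)).2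
  have h1 : G ^ 2 / (1 - β ^ 2) ≤ G ^ 2 / (1 - β) :=
    div_le_div_of_nonneg_left (sq_nonneg G) (by linarith) (by nlinarith)
  calc discountedNorm β v t ≤ √(G ^ 2 / (1 - β)) := Real.sqrt_le_sqrt (hQ.trans h1)
    _ = G / √(1 - β) := by rw [Real.sqrt_div (sq_nonneg G), Real.sqrt_sq hG]

section FTRLStep

/- One step of β-FTRL: `s` and `r` are the discounted sum and norm before the loss `w` arrives,
`β * s + w` and `r'` after it. -/
variable {α β M s r r' w : ℝ}

theorem ftrl_step_le_of_two_mul_le (hα : 0 ≤ α) (hβ : 0 ≤ β) (hM : 0 ≤ M) (hr : 0 ≤ r)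
    (hr' : 0 ≤ r') (hr'sq : r' ^ 2 = β ^ 2 * r ^ 2 + w ^ 2) (hs : |s| ≤ M * r)
    (hs' : |β * s + w| ≤ M * r') (hlarge : 2 * (β * r) ≤ r') :
    w * (-α * s / r) ≤ α / 2 * (β * (s ^ 2 / r) - (β * s + w) ^ 2 / r')
      + 2 * α * (1 + M + M ^ 2) * (r' - β * r) := by
  have hw : |w| ≤ r' := abs_le_of_sq_le_sq (by nlinarith) hr'
  have hΔ : |-α * s / r| ≤ α * M := by
    rw [abs_div, abs_mul, abs_neg, abs_of_nonneg hα, abs_of_nonneg hr]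
    exact div_le_of_le_mul₀ hr (by positivity) (by rw [mul_assoc]; gcongr)
  have hA' : (β * s + w) ^ 2 / r' ≤ M ^ 2 * r' := by
    refine div_le_of_le_mul₀ hr' (by positivity) ?_
    rw [← sq_abs]
    nlinarith [abs_nonneg (β * s + w)]
  have hA : 0 ≤ β * (s ^ 2 / r) := by positivity
  have hloss : w * (-α * s / r) ≤ α * M * r' :=
    (le_abs_self _).trans (by rw [abs_mul]; nlinarith [abs_nonneg w, abs_nonneg (-α * s / r)])
  nlinarith [mul_nonneg hα hM, mul_nonneg hα (sq_nonneg M)]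

theorem ftrl_step_le_of_lt_two_mul (hα : 0 ≤ α) (hβ : 0 ≤ β) (hM : 0 ≤ M) (hr : 0 ≤ r)
    (hr' : 0 ≤ r') (hr'sq : r' ^ 2 = β ^ 2 * r ^ 2 + w ^ 2) (hsmall : r' < 2 * (β * r)) :
    w * (-α * s / r) ≤ α / 2 * (β * (s ^ 2 / r) - (β * s + w) ^ 2 / r')
      + 2 * α * (1 + M + M ^ 2) * (r' - β * r) := by
  have hβr : 0 < β * r := by linarith
  have hβr' : β * r ≤ r' := abs_le_of_sq_le_sq (by nlinarith) hr' |>.trans' (le_abs_self _)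
  have hr'pos : 0 < r' := hβr.trans_le hβr'
  have hβ0 : 0 < β := pos_of_mul_pos_left hβr hr
  have hr0 : 0 < r := pos_of_mul_pos_right hβr hβ
  -- expand `(β s + w)²` to trade the cross term `w s` for squares
  have hid : w * (-α * s / r) = α / 2 * (β * (s ^ 2 / r))
      + α * (w ^ 2 / (2 * (β * r))) - α * ((β * s + w) ^ 2 / (2 * (β * r))) := by
    field_simp
    ring
  have hA' : (β * s + w) ^ 2 / (2 * r') ≤ (β * s + w) ^ 2 / (2 * (β * r)) := by gcongr
  have hw : w ^ 2 / (2 * (β * r)) ≤ 2 * (r' - β * r) := by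
    rw [div_le_iff₀ (by positivity)]
    nlinarith
  have hK : α * (2 * (r' - β * r)) ≤ 2 * α * (1 + M + M ^ 2) * (r' - β * r) := by
    have : 0 ≤ α * (r' - β * r) := mul_nonneg hα (by linarith)
    nlinarith [mul_nonneg this (add_nonneg hM (sq_nonneg M))]
  have : (β * s + w) ^ 2 / r' = 2 * ((β * s + w) ^ 2 / (2 * r')) := by field_simp
  nlinarith [mul_le_mul_of_nonneg_left hA' hα, mul_le_mul_of_nonneg_left hw hα]

theorem ftrl_step_le (hα : 0 ≤ α) (hβ : 0 ≤ β) (hM : 0 ≤ M) (hr : 0 ≤ r)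
    (hr' : 0 ≤ r') (hr'sq : r' ^ 2 = β ^ 2 * r ^ 2 + w ^ 2) (hs : |s| ≤ M * r)
    (hs' : |β * s + w| ≤ M * r') :
    w * (-α * s / r) ≤ α / 2 * (β * (s ^ 2 / r) - (β * s + w) ^ 2 / r')
      + 2 * α * (1 + M + M ^ 2) * (r' - β * r) := by
  rcases le_or_gt (2 * (β * r)) r' with hlarge | hsmall
  · exact ftrl_step_le_of_two_mul_le hα hβ hM hr hr' hr'sq hs hs' hlarge
  · exact ftrl_step_le_of_lt_two_mul hα hβ hM hr hr' hr'sq hsmall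

end FTRLStep

theorem sum_mul_ftrl_le {α M : ℝ} {T : ℕ} (hα : 0 ≤ α) (hβ0 : 0 ≤ β) (hβ1 : β ≤ 1)
    (hM : 0 ≤ M) (hSM : ∀ t ≤ T, |discountedSum β v t| ≤ M * discountedNorm β v t) :
    ∑ t ∈ Icc 1 T, v t * (-α * discountedSum β v (t - 1) / discountedNorm β v (t - 1)) ≤
      2 * α * (1 + M + M ^ 2) *
        ∑ t ∈ Icc 1 T, (discountedNorm β v t - β * discountedNorm β v (t - 1)) := by
  -- the potential `α/2 · S_t² / R_t` telescopes (up to the factor `β ≤ 1`) across the step bounds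
  suffices h : ∀ n ≤ T,
      ∑ t ∈ Icc 1 n, v t * (-α * discountedSum β v (t - 1) / discountedNorm β v (t - 1)) +
        α / 2 * (discountedSum β v n ^ 2 / discountedNorm β v n) ≤
      2 * α * (1 + M + M ^ 2) *
        ∑ t ∈ Icc 1 n, (discountedNorm β v t - β * discountedNorm β v (t - 1)) by
    have hA : 0 ≤ α / 2 * (discountedSum β v T ^ 2 / discountedNorm β v T) :=
      mul_nonneg (by positivity) (div_nonneg (sq_nonneg _) discountedNorm_nonneg)
    linarith [h T le_rfl]
  intro n hn
  induction n with
  | zero => simp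
  | succ n ih =>
    have ih := ih (by omega)
    have hs' : |β * discountedSum β v n + v (n + 1)| ≤ M * discountedNorm β v (n + 1) := by
      rw [← discountedSum_succ]
      exact hSM (n + 1) hn
    have hstep := ftrl_step_le (α := α) hα hβ0 hM discountedNorm_nonneg discountedNorm_nonneg
      (discountedNorm_succ_sq β v n) (hSM n (by omega)) hs'
    rw [← discountedSum_succ] at hstep
    have hA : 0 ≤ discountedSum β v n ^ 2 / discountedNorm β v n :=
      div_nonneg (sq_nonneg _) discountedNorm_nonneg
    rw [sum_Icc_succ_top (by omega), sum_Icc_succ_top (by omega), Nat.add_sub_cancel]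
    nlinarith [mul_le_mul_of_nonneg_left hβ1 (mul_nonneg hα hA)]

theorem sum_sub_mul_le {f : ℕ → ℝ} {ρ : ℝ} {T : ℕ} (hβ : β ≤ 1) (hf : ∀ t < T, f t ≤ ρ) :
    ∑ t ∈ Icc 1 T, (f t - β * f (t - 1)) ≤ f T - f 0 + (1 - β) * T * ρ := by
  induction T with
  | zero => simp
  | succ T ih =>
    have ih := ih fun t ht => hf t (by omega)
    have hfT := hf T (by omega)
    rw [sum_Icc_succ_top (by omega), Nat.add_sub_cancel]
    push_cast
    nlinarith [mul_le_mul_of_nonneg_left hfT (by linarith : 0 ≤ 1 - β)]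

theorem sum_mul_prev_eq (β : ℝ) (v u : ℕ → ℝ) (n : ℕ) :
    ∑ t ∈ Icc 1 n, v t * u (t - 1) = discountedSum β v n * u (n - 1) +
      ∑ t ∈ Icc 1 (n - 1),
        (discountedSum β v t * (u (t - 1) - u t) + (1 - β) * (discountedSum β v t * u t)) := by
  induction n with
  | zero => simp
  | succ n ih =>
    rcases n with _ | n
    · simp [discountedSum]
    · rw [sum_Icc_succ_top (by omega), ih, Nat.add_sub_cancel, Nat.add_sub_cancel,
        sum_Icc_succ_top (by omega), Nat.add_sub_cancel, discountedSum_succ β v (n + 1)]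
      ring

theorem neg_sum_mul_prev_le {u : ℕ → ℝ} {B U : ℝ} {T : ℕ} (hβ : β ≤ 1)
    (hS : ∀ t ≤ T, |discountedSum β v t| ≤ B) (hu : ∀ t, |u t| ≤ U) :
    -∑ t ∈ Icc 1 T, v t * u (t - 1) ≤
      B * (U + ∑ t ∈ Icc 1 (T - 1), |u t - u (t - 1)| + (1 - β) * T * U) := by
  have hB : 0 ≤ B := (abs_nonneg _).trans (hS T le_rfl)
  have hU : 0 ≤ U := (abs_nonneg _).trans (hu 0)
  have hbound : ∀ t ≤ T, ∀ k, |discountedSum β v t * u k| ≤ B * U := fun t ht k => by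
    rw [abs_mul]; exact mul_le_mul (hS t ht) (hu k) (abs_nonneg _) hB
  have hterm : ∀ t ∈ Icc 1 (T - 1),
      -(discountedSum β v t * (u (t - 1) - u t) + (1 - β) * (discountedSum β v t * u t)) ≤
        B * |u t - u (t - 1)| + (1 - β) * (B * U) := fun t ht => by
    have ht : t ≤ T := by have := (mem_Icc.1 ht).2; omega
    have h1 : |discountedSum β v t * (u (t - 1) - u t)| ≤ B * |u t - u (t - 1)| := by
      rw [abs_mul, abs_sub_comm]; exact mul_le_mul_of_nonneg_right (hS t ht) (abs_nonneg _)
    have h2 := mul_le_mul_of_nonneg_left ((neg_le_abs _).trans (hbound t ht t))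
      (by linarith : 0 ≤ 1 - β)
    linarith [neg_le_abs (discountedSum β v t * (u (t - 1) - u t))]
  have hsum := sum_le_sum hterm
  rw [sum_add_distrib, ← mul_sum, sum_const, Nat.card_Icc, Nat.add_sub_cancel, nsmul_eq_mul]
    at hsum
  have hT : ((T - 1 : ℕ) : ℝ) ≤ T := Nat.cast_le.2 (Nat.sub_le T 1)
  rw [sum_mul_prev_eq β, neg_add, ← sum_neg_distrib]
  nlinarith [neg_le_abs (discountedSum β v T * u (T - 1)), hbound T le_rfl (T - 1),
    mul_le_mul_of_nonneg_right hT (mul_nonneg (by linarith : 0 ≤ 1 - β) (mul_nonneg hB hU))]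

theorem sum_mul_ftrl_sub_le {α M ρ : ℝ} {T : ℕ} {u : ℕ → ℝ} (hα : 0 ≤ α) (hβ0 : 0 ≤ β)
    (hβ1 : β ≤ 1) (hM : 0 ≤ M)
    (hSM : ∀ t ≤ T, |discountedSum β v t| ≤ M * discountedNorm β v t)
    (hR : ∀ t ≤ T, discountedNorm β v t ≤ ρ) (hu : ∀ t, |u t| ≤ α * M) :
    ∑ t ∈ Icc 1 T,
        v t * (-α * discountedSum β v (t - 1) / discountedNorm β v (t - 1) - u (t - 1)) ≤
      4 * ((α + α * M ^ 2 + M * ∑ t ∈ Icc 1 (T - 1), |u t - u (t - 1)|) * ρ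
        + (α + α * M ^ 2) * ((1 - β) * T * ρ)) := by
  have hρ : 0 ≤ ρ := discountedNorm_nonneg.trans (hR 0 (Nat.zero_le T))
  have hy : 0 ≤ (1 - β) * T * ρ := mul_nonneg (mul_nonneg (by linarith) T.cast_nonneg) hρ
  have hP : 0 ≤ ∑ t ∈ Icc 1 (T - 1), |u t - u (t - 1)| := sum_nonneg fun _ _ => abs_nonneg _
  have hregret := (sum_mul_ftrl_le hα hβ0 hβ1 hM hSM).trans
    (mul_le_mul_of_nonneg_left (sum_sub_mul_le hβ1 fun t ht => hR t ht.le) (by positivity))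
  rw [discountedNorm_zero, sub_zero] at hregret
  have hcomp := neg_sum_mul_prev_le (B := M * ρ) hβ1
    (fun t ht => (hSM t ht).trans (mul_le_mul_of_nonneg_left (hR t ht) hM)) hu
  have hRT := mul_le_mul_of_nonneg_left (hR T le_rfl) (by positivity : 0 ≤ 2 * α * (1 + M + M ^ 2))
  rw [sum_congr rfl fun t _ => mul_sub (v t) _ _, sum_sub_distrib]
  nlinarith [mul_nonneg (mul_nonneg hα hρ) (sq_nonneg (M - 1)),
    mul_nonneg (mul_nonneg hα hy) (sq_nonneg (M - 1)), mul_nonneg (mul_nonneg hM hP) hρ]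

end BetaFTRL

open BetaFTRL Finset in
theorem stmt_19 :
    ∃ C : ℝ, 0 < C ∧
      ∀ (β α G : ℝ) (T : ℕ) (v u Δ : ℕ → ℝ) (M : ℝ)
        (hβ : β ∈ Set.Ioo (0:ℝ) 1) (hα : 0 < α) (hT : 1 ≤ T)
        (hG : ∀ t ∈ Finset.Icc 1 T, |v t| ≤ G)
        (hΔ0 : Δ 0 = 0)
        (hΔ : ∀ t, 1 ≤ t →
          Δ t = if (∑ s ∈ Finset.Icc 1 t, (β ^ (t - s) * v s) ^ 2) = 0 then 0
            else -α * (∑ s ∈ Finset.Icc 1 t, β ^ (t - s) * v s)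
              / Real.sqrt (∑ s ∈ Finset.Icc 1 t, (β ^ (t - s) * v s) ^ 2))
        (hM : M = (Finset.Icc 1 T).sup' (Finset.nonempty_Icc.mpr hT) (fun t =>
          if (∑ s ∈ Finset.Icc 1 t, (β ^ (t - s) * v s) ^ 2) = 0 then 0
          else |∑ s ∈ Finset.Icc 1 t, β ^ (t - s) * v s|
            / Real.sqrt (∑ s ∈ Finset.Icc 1 t, (β ^ (t - s) * v s) ^ 2)))
        (hu : ∀ t, |u t| ≤ α * M),
        ∑ t ∈ Finset.Icc 1 T, v t * (Δ (t - 1) - u (t - 1))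
          ≤ C * ((α + α * M ^ 2
                + M * (∑ t ∈ Finset.Icc 1 (T - 1), |u t - u (t - 1)|)) * G
                  / Real.sqrt (1 - β)
              + (α + α * M ^ 2) * Real.sqrt (1 - β) * G * T) := by
  refine ⟨4, by norm_num, ?_⟩
  intro β α G T v u Δ M ⟨hβ0, hβ1⟩ hα hT hG hΔ0 hΔ hM hu
  simp only [ite_eq_zero_div_sqrt] at hΔ hM
  have hΔ' : ∀ t, Δ t = -α * discountedSum β v t / discountedNorm β v t
    | 0 => by simp [hΔ0]
    | t + 1 => hΔ (t + 1) (by omega)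
  have hTmem : T ∈ Icc 1 T := mem_Icc.2 ⟨hT, le_rfl⟩
  have hM0 : 0 ≤ M := hM ▸ le_sup'_of_le _ hTmem (by positivity)
  have hSM : ∀ t ≤ T, |discountedSum β v t| ≤ M * discountedNorm β v t := fun t ht =>
    hM ▸ abs_discountedSum_le_sup'_mul _ ht
  have hG0 : 0 ≤ G := (abs_nonneg _).trans (hG T hTmem)
  have hR : ∀ t ≤ T, discountedNorm β v t ≤ G / √(1 - β) := fun t ht =>
    discountedNorm_le hβ0.le hβ1 hG0 fun s hs => hG s (Icc_subset_Icc_right ht hs)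
  have hregret := sum_mul_ftrl_sub_le hα.le hβ0.le hβ1.le hM0 hSM hR hu
  simp only [← hΔ'] at hregret
  have hρ : (1 - β) * (G / √(1 - β)) = √(1 - β) * G := by
    rw [mul_div_left_comm, Real.div_sqrt, mul_comm]
  refine hregret.trans_eq ?_
  rw [mul_div_assoc]
  linear_combination 4 * (α + α * M ^ 2) * T * hρ
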